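/- For every ν ≥ 1 the following holds. Let Υ be a proper ν-hyperbolic geodesic space and suppose that for all p, q ∈ Υ with d(p,q) ≤ 100ν there exists a geodesic [p, q'] of length at least 200ν with d(q, [p,q']) ≤ ν. Then Υ is 5ν-visible: for every a, b ∈ Υ there is a geodesic ray based at a passing within 5ν of b. -/

import Mathlib

open Metric Set

variable {X : Type*} [MetricSpace X]

/-- `f` parametrizes a geodesic segment from `x` to `y` (by arc length on `[0, dist x y]`). -/
def IsGeodesicSegment (f : ℝ → X) (x y : X) : Prop :=
  f 0 = x ∧ f (dist x y) = y ∧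
    ∀ s ∈ Icc (0 : ℝ) (dist x y), ∀ t ∈ Icc (0 : ℝ) (dist x y), dist (f s) (f t) = |s - t|

/-- `r` is a unit-speed geodesic ray based at `r 0`. -/
def IsGeodesicRay (r : ℝ → X) : Prop :=
  ∀ ⦃s t : ℝ⦄, 0 ≤ s → 0 ≤ t → dist (r s) (r t) = |s - t|

/-- `X` is `δ`-hyperbolic in the thin-triangles sense. -/
def SlimTriangles (X : Type*) [MetricSpace X] (δ : ℝ) : Prop :=
  ∀ (x y z : X) (f g h : ℝ → X), IsGeodesicSegment f x y → IsGeodesicSegment g y z →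
    IsGeodesicSegment h x z → ∀ t ∈ Icc (0 : ℝ) (dist x z),
      ∃ s, (s ∈ Icc (0 : ℝ) (dist x y) ∧ dist (h t) (f s) ≤ δ) ∨
           (s ∈ Icc (0 : ℝ) (dist y z) ∧ dist (h t) (g s) ≤ δ)

def GeodesicSpace (X : Type*) [MetricSpace X] : Prop :=
  ∀ x y : X, ∃ f : ℝ → X, IsGeodesicSegment f x y

/-- `X` is `μ`-visible: for every `a, b` there is a geodesic ray based at `a` passing
within `μ` of `b`. -/
def Visible (X : Type*) [MetricSpace X] (μ : ℝ) : Prop :=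
  ∀ a b : X, ∃ r : ℝ → X, IsGeodesicRay r ∧ r 0 = a ∧ ∃ t : ℝ, 0 ≤ t ∧ dist b (r t) ≤ μ

/-!
Start from a geodesic segment `[a, q]` of length `≥ 100ν` passing within `2ν` of `b`: when `b` is
close to `a` the local hypothesis provides it directly, otherwise one extends `[a, b]` at the point
`50ν` before `b` and straightens the resulting corner by a thin triangle. Then repeatedly back up
`50ν` from the end of the current segment and extend again. By the four-point condition the
breakpoints form a chain with edges `≥ 15ν` and Gromov products `≤ 4ν` at the corners; such a chain
is a quasi-geodesic, so its breakpoints `v n` escape to infinity and every geodesic `[a, v n]` stays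
within `ν` of the first edge, hence within `3ν` of `b`. By properness a subsequence of these
geodesics converges to a geodesic ray from `a`, still passing within `3ν` of `b`.
-/

open Filter Topology

-- `gromovProduct w x y` is the Gromov product `(x | y)_w`.
noncomputable def gromovProduct (w x y : X) : ℝ := (dist x w + dist y w - dist x y) / 2

theorem gromovProduct_comm (w x y : X) : gromovProduct w x y = gromovProduct w y x := by
  simp only [gromovProduct, dist_comm x y, add_comm (dist x w)]

theorem gromovProduct_nonneg (w x y : X) : 0 ≤ gromovProduct w x y := by
  have := dist_triangle x w y
  rw [dist_comm w y] at this
  simp only [gromovProduct]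
  linarith

theorem gromovProduct_le_dist (w x y : X) : gromovProduct w x y ≤ dist y w := by
  have := dist_triangle x y w
  simp only [gromovProduct]
  linarith

theorem gromovProduct_add_gromovProduct (w x y : X) :
    gromovProduct w x y + gromovProduct x w y = dist x w := by
  simp only [gromovProduct, dist_comm w x, dist_comm y x, dist_comm w y]
  ring

theorem gromovProduct_le_add_dist (w x y y' : X) :
    gromovProduct w x y ≤ gromovProduct w x y' + dist y y' := by
  have h1 := dist_triangle y y' w
  have h2 := dist_triangle x y y'
  simp only [gromovProduct]
  linarith

theorem gromovProduct_eq_zero_of_dist_add {m x y : X} (h : dist x m + dist m y = dist x y) :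
    gromovProduct m x y = 0 := by
  simp only [gromovProduct, dist_comm y m]
  linarith

theorem gromovProduct_le_of_dist_add {w m z : X} (x : X) (h : dist w m + dist m z = dist w z) :
    gromovProduct w x m ≤ gromovProduct w x z := by
  have := dist_triangle x m z
  simp only [gromovProduct, dist_comm m w, dist_comm z w]
  linarith

namespace IsGeodesicSegment

variable {f : ℝ → X} {x y : X}

theorem dist_left (hf : IsGeodesicSegment f x y) {t : ℝ} (ht : t ∈ Icc 0 (dist x y)) :
    dist x (f t) = t := by
  have := hf.2.2 0 ⟨le_rfl, dist_nonneg⟩ t ht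
  rwa [hf.1, zero_sub, abs_neg, abs_of_nonneg ht.1] at this

theorem dist_right (hf : IsGeodesicSegment f x y) {t : ℝ} (ht : t ∈ Icc 0 (dist x y)) :
    dist y (f t) = dist x y - t := by
  have := hf.2.2 _ ⟨dist_nonneg, le_rfl⟩ t ht
  rwa [hf.2.1, abs_of_nonneg (sub_nonneg.2 ht.2)] at this

theorem dist_add (hf : IsGeodesicSegment f x y) {t : ℝ} (ht : t ∈ Icc 0 (dist x y)) :
    dist x (f t) + dist (f t) y = dist x y := by
  rw [hf.dist_left ht, dist_comm, hf.dist_right ht]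
  ring

theorem restrict (hf : IsGeodesicSegment f x y) {c : ℝ} (hc : c ∈ Icc 0 (dist x y)) :
    IsGeodesicSegment f x (f c) := by
  have hxc := hf.dist_left hc
  refine ⟨hf.1, by rw [hxc], fun s hs t ht => ?_⟩
  rw [hxc] at hs ht
  exact hf.2.2 s ⟨hs.1, hs.2.trans hc.2⟩ t ⟨ht.1, ht.2.trans hc.2⟩

theorem symm (hf : IsGeodesicSegment f x y) :
    IsGeodesicSegment (fun t => f (dist x y - t)) y x := by
  refine ⟨by simpa using hf.2.1, by simp [dist_comm y x, hf.1], fun s hs t ht => ?_⟩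
  rw [dist_comm y x] at hs ht
  have hs' : dist x y - s ∈ Icc 0 (dist x y) := ⟨by linarith [hs.2], by linarith [hs.1]⟩
  have ht' : dist x y - t ∈ Icc 0 (dist x y) := ⟨by linarith [ht.2], by linarith [ht.1]⟩
  rw [hf.2.2 _ hs' _ ht', ← abs_neg]
  ring_nf

theorem gromovProduct_le_dist (hf : IsGeodesicSegment f x y) (w : X) {t : ℝ}
    (ht : t ∈ Icc 0 (dist x y)) : gromovProduct w x y ≤ dist w (f t) := by
  have h1 := dist_triangle x (f t) w
  have h2 := dist_triangle y (f t) w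
  rw [hf.dist_left ht, dist_comm (f t) w] at h1
  rw [hf.dist_right ht, dist_comm (f t) w] at h2
  simp only [gromovProduct]
  linarith

theorem gromovProduct_eq (hf : IsGeodesicSegment f x y) {t : ℝ} (ht : t ∈ Icc 0 (dist x y)) :
    gromovProduct x y (f t) = t := by
  simp only [gromovProduct, dist_comm y x, dist_comm (f t) x, hf.dist_left ht, hf.dist_right ht]
  ring

end IsGeodesicSegment

namespace SlimTriangles

variable {δ : ℝ}

theorem exists_dist_le_gromovProduct_add (hhyp : SlimTriangles X δ) (hgeo : GeodesicSpace X)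
    {h : ℝ → X} {x z : X} (hh : IsGeodesicSegment h x z) (w : X) :
    ∃ t ∈ Icc 0 (dist x z), dist w (h t) ≤ gromovProduct w x z + 2 * δ := by
  set t := gromovProduct x w z
  have ht : t ∈ Icc 0 (dist x z) :=
    ⟨gromovProduct_nonneg x w z, (gromovProduct_le_dist x w z).trans_eq (dist_comm z x)⟩
  refine ⟨t, ht, ?_⟩
  obtain ⟨f, hf⟩ := hgeo x w
  obtain ⟨g, hg⟩ := hgeo w z
  have hw : gromovProduct w x z = (dist x w + dist z w - dist x z) / 2 := rfl
  have hx : t = (dist w x + dist z x - dist w z) / 2 := rfl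
  obtain ⟨s, ⟨hs, hfs⟩ | ⟨hs, hgs⟩⟩ := hhyp x w z f g h hf hg hh t ht
  · have h1 := dist_triangle x (f s) (h t)
    have h2 := dist_triangle w (f s) (h t)
    rw [hh.dist_left ht, hf.dist_left hs, dist_comm (f s)] at h1
    rw [hf.dist_right hs, dist_comm (f s)] at h2
    linarith [dist_comm x w, dist_comm x z, dist_comm z w]
  · have h1 := dist_triangle z (g s) (h t)
    have h2 := dist_triangle w (g s) (h t)
    rw [hh.dist_right ht, hg.dist_right hs, dist_comm (g s)] at h1
    rw [hg.dist_left hs, dist_comm (g s)] at h2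
    linarith [dist_comm x w, dist_comm x z, dist_comm z w]

theorem min_gromovProduct_le (hhyp : SlimTriangles X δ) (hgeo : GeodesicSpace X) (w x y z : X) :
    min (gromovProduct w x y) (gromovProduct w y z) ≤ gromovProduct w x z + 3 * δ := by
  obtain ⟨h, hh⟩ := hgeo x z
  obtain ⟨f, hf⟩ := hgeo x y
  obtain ⟨g, hg⟩ := hgeo y z
  obtain ⟨t, ht, hwt⟩ := hhyp.exists_dist_le_gromovProduct_add hgeo hh w
  obtain ⟨s, ⟨hs, hfs⟩ | ⟨hs, hgs⟩⟩ := hhyp x y z f g h hf hg hh t ht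
  · have := hf.gromovProduct_le_dist w hs
    linarith [min_le_left (gromovProduct w x y) (gromovProduct w y z), dist_triangle w (h t) (f s)]
  · have := hg.gromovProduct_le_dist w hs
    linarith [min_le_right (gromovProduct w x y) (gromovProduct w y z), dist_triangle w (h t) (g s)]

theorem exists_dist_le_of_gromovProduct_lt (hhyp : SlimTriangles X δ) (hδ : 0 ≤ δ)
    {f g h : ℝ → X} {x y z : X} (hf : IsGeodesicSegment f x y) (hg : IsGeodesicSegment g y z)
    (hh : IsGeodesicSegment h x z) {t : ℝ} (ht0 : 0 ≤ t)
    (ht : t + gromovProduct z x y + δ < dist x z) :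
    ∃ s ∈ Icc 0 (dist x y), dist (h t) (f s) ≤ δ := by
  have htmem : t ∈ Icc 0 (dist x z) := ⟨ht0, by linarith [gromovProduct_nonneg z x y]⟩
  obtain ⟨s, hfs | ⟨hs, hgs⟩⟩ := hhyp x y z f g h hf hg hh t htmem
  · exact ⟨s, hfs⟩
  · have h1 := dist_triangle4 x (h t) (g s) y
    have h2 := dist_triangle z (g s) (h t)
    rw [hh.dist_left htmem, dist_comm (g s) y, hg.dist_left hs] at h1
    rw [hh.dist_right htmem, hg.dist_right hs, dist_comm (g s)] at h2
    simp only [gromovProduct] at ht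
    linarith [dist_comm x z, dist_comm y z]

-- Four-point condition at `m` for `x, z, g u`: `(z | g u)_m = u` is large, `(x | g u)_m ≤ δ`.
theorem gromovProduct_le_of_dist_le (hhyp : SlimTriangles X δ) (hgeo : GeodesicSpace X)
    {m x y z : X} {g : ℝ → X} {u : ℝ} (hxy : gromovProduct m x y = 0)
    (hg : IsGeodesicSegment g m z) (hu : u ∈ Icc 0 (dist m z)) (hy : dist y (g u) ≤ δ)
    (hδu : 4 * δ < u) : gromovProduct m x z ≤ 4 * δ := by
  have h1 := hhyp.min_gromovProduct_le hgeo m x z (g u)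
  have h2 := gromovProduct_le_add_dist m x (g u) y
  rw [hg.gromovProduct_eq hu] at h1
  rw [dist_comm] at h2
  rcases min_le_iff.1 h1 with h | h <;> linarith

end SlimTriangles

/-- The breakpoints `v 0, …, v N` of a broken geodesic with long edges and small corners. -/
def IsStraightChain (ν : ℝ) (v : ℕ → X) (N : ℕ) : Prop :=
  (∀ i, i + 1 ≤ N → 15 * ν ≤ dist (v i) (v (i + 1))) ∧
    ∀ i, i + 2 ≤ N → gromovProduct (v (i + 1)) (v i) (v (i + 2)) ≤ 4 * ν

namespace IsStraightChain

variable {ν : ℝ} {v : ℕ → X} {N : ℕ}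

theorem reverse (hv : IsStraightChain ν v N) : IsStraightChain ν (fun i => v (N - i)) N := by
  refine ⟨fun i hi => ?_, fun i hi => ?_⟩
  · have h := hv.1 (N - (i + 1)) (by omega)
    rwa [show N - (i + 1) + 1 = N - i by omega, dist_comm] at h
  · have h := hv.2 (N - (i + 2)) (by omega)
    rwa [show N - (i + 2) + 1 = N - (i + 1) by omega, show N - (i + 2) + 2 = N - i by omega,
      gromovProduct_comm] at h

variable (hgeo : GeodesicSpace X) (hhyp : SlimTriangles X ν) (hν : 0 < ν)
include hgeo hhyp hν

theorem gromovProduct_le (hv : IsStraightChain ν v N) :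
    ∀ k, k + 1 ≤ N → gromovProduct (v k) (v 0) (v (k + 1)) ≤ 7 * ν
  | 0, _ => by
    simp only [gromovProduct, dist_self, zero_add, dist_comm (v 1), sub_self, zero_div]
    linarith
  | k + 1, hk => by
    -- the edge `[v k, v (k + 1)]` is long, so `(v k | v 0)` is large at `v (k + 1)`, and the
    -- four-point condition there moves the bound on to `(v 0 | v (k + 2))`
    have ih := gromovProduct_le hv k (by omega)
    have hsum := gromovProduct_add_gromovProduct (v (k + 1)) (v k) (v 0)
    rw [gromovProduct_comm (v k)] at hsum
    have hback : 7 * ν < gromovProduct (v (k + 1)) (v k) (v 0) := by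
      linarith [hv.1 k (by omega)]
    have h4 := hhyp.min_gromovProduct_le hgeo (v (k + 1)) (v k) (v 0) (v (k + 2))
    rcases min_le_iff.1 h4 with h | h <;> linarith [hv.2 k hk]

theorem mul_le_dist (hv : IsStraightChain ν v N) : ∀ k, k ≤ N → ν * k ≤ dist (v 0) (v k)
  | 0, _ => by simp
  | k + 1, hk => by
    have ih := mul_le_dist hv k (by omega)
    have hcorner := hv.gromovProduct_le hgeo hhyp hν k hk
    simp only [gromovProduct] at hcorner
    push_cast
    linarith [hv.1 k hk, dist_comm (v 0) (v k), dist_comm (v 0) (v (k + 1)),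
      dist_comm (v k) (v (k + 1))]

theorem gromovProduct_one_le (hv : IsStraightChain ν v N) (hN : 1 ≤ N) :
    gromovProduct (v 1) (v 0) (v N) ≤ 7 * ν := by
  have h := hv.reverse.gromovProduct_le hgeo hhyp hν (N - 1) (by omega)
  simp only [Nat.sub_sub_self hN, Nat.sub_zero, Nat.sub_add_cancel hN, Nat.sub_self] at h
  rwa [gromovProduct_comm]

theorem exists_dist_le (hv : IsStraightChain ν v N) (hN : 1 ≤ N) {e h : ℝ → X}
    (he : IsGeodesicSegment e (v 0) (v 1)) (hh : IsGeodesicSegment h (v 0) (v N)) {u : ℝ}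
    (hu0 : 0 ≤ u) (hu : u + 8 * ν < dist (v 0) (v 1)) :
    ∃ s ∈ Icc 0 (dist (v 0) (v N)), dist (e u) (h s) ≤ ν := by
  obtain ⟨g, hg⟩ := hgeo (v N) (v 1)
  exact hhyp.exists_dist_le_of_gromovProduct_lt hν.le hh hg he hu0
    (by linarith [hv.gromovProduct_one_le hgeo hhyp hν hN])

end IsStraightChain

def LocallyVisible (X : Type*) [MetricSpace X] (ν : ℝ) : Prop :=
  ∀ p q : X, dist p q ≤ 100 * ν →
    ∃ (q' : X) (f : ℝ → X), IsGeodesicSegment f p q' ∧ 200 * ν ≤ dist p q' ∧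
      ∃ t ∈ Icc (0 : ℝ) (dist p q'), dist q (f t) ≤ ν

structure LongSegment (X : Type*) [MetricSpace X] (ν : ℝ) where
  start : X
  finish : X
  path : ℝ → X
  isGeodesicSegment : IsGeodesicSegment path start finish
  long : 100 * ν ≤ dist start finish

namespace LongSegment

variable {ν : ℝ} (S : LongSegment X ν)

noncomputable def pivot : X := S.path (dist S.start S.finish - 50 * ν)

variable {S}

theorem pivot_mem (hν : 0 ≤ ν) :
    dist S.start S.finish - 50 * ν ∈ Icc 0 (dist S.start S.finish) :=
  ⟨by linarith [S.long], by linarith⟩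

theorem dist_start_pivot (hν : 0 ≤ ν) :
    dist S.start S.pivot = dist S.start S.finish - 50 * ν :=
  S.isGeodesicSegment.dist_left (pivot_mem hν)

theorem dist_pivot_finish (hν : 0 ≤ ν) : dist S.pivot S.finish = 50 * ν := by
  rw [dist_comm, pivot, S.isGeodesicSegment.dist_right (pivot_mem hν)]
  ring

theorem exists_next (hgeo : GeodesicSpace X) (hhyp : SlimTriangles X ν)
    (hlocal : LocallyVisible X ν) (hν : 0 < ν) :
    ∃ S' : LongSegment X ν,
      S'.start = S.pivot ∧ gromovProduct S.pivot S.start S'.finish ≤ 4 * ν := by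
  obtain ⟨q, f, hf, hlong, u, hu, hqu⟩ :=
    hlocal S.pivot S.finish (by linarith [dist_pivot_finish hν.le (S := S)])
  refine ⟨⟨S.pivot, q, f, hf, by linarith⟩, rfl, ?_⟩
  have hbetween : dist S.start S.pivot + dist S.pivot S.finish = dist S.start S.finish := by
    rw [dist_start_pivot hν.le, dist_pivot_finish hν.le]
    ring
  refine hhyp.gromovProduct_le_of_dist_le hgeo (gromovProduct_eq_zero_of_dist_add hbetween) hf hu
    hqu ?_
  have := dist_triangle S.pivot (f u) S.finish
  rw [hf.dist_left hu, dist_pivot_finish hν.le, dist_comm] at this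
  linarith

end LongSegment

section Construction

variable {ν : ℝ} (hgeo : GeodesicSpace X) (hhyp : SlimTriangles X ν)
  (hlocal : LocallyVisible X ν) (hν : 0 < ν)
include hgeo hhyp hlocal hν

theorem exists_isStraightChain (S₀ : LongSegment X ν) :
    ∃ v : ℕ → X, v 0 = S₀.start ∧ v 1 = S₀.pivot ∧ ∀ N, IsStraightChain ν v N := by
  choose next hstart hcorner using fun S : LongSegment X ν => S.exists_next hgeo hhyp hlocal hν
  set S : ℕ → LongSegment X ν := fun n => next^[n] S₀
  have hnext : ∀ n, S (n + 1) = next (S n) := fun n => Function.iterate_succ_apply' next n S₀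
  have hS : ∀ n, (S (n + 1)).start = (S n).pivot := fun n => by rw [hnext, hstart]
  refine ⟨fun n => (S n).start, rfl, hS 0, fun N => ⟨fun i _ => ?_, fun i _ => ?_⟩⟩
  · dsimp only
    rw [hS, LongSegment.dist_start_pivot hν.le]
    linarith [(S i).long]
  · dsimp only
    have hbetween : dist (S (i + 1)).start (S (i + 2)).start
        + dist (S (i + 2)).start (S (i + 1)).finish
        = dist (S (i + 1)).start (S (i + 1)).finish := by
      rw [hS (i + 1), LongSegment.dist_start_pivot hν.le, LongSegment.dist_pivot_finish hν.le]
      ring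
    refine (gromovProduct_le_of_dist_add _ hbetween).trans ?_
    rw [hS, hnext]
    exact hcorner (S i)

theorem exists_longSegment_near_of_lt_dist {a b : X} (hab : 100 * ν < dist a b) :
    ∃ (S : LongSegment X ν) (u : ℝ),
      S.start = a ∧ 0 ≤ u ∧ u + 58 * ν < dist a S.finish ∧ dist b (S.path u) ≤ 2 * ν := by
  obtain ⟨c, hc⟩ := hgeo a b
  have hmem : dist a b - 50 * ν ∈ Icc 0 (dist a b) := ⟨by linarith, by linarith⟩
  set p := c (dist a b - 50 * ν)
  have hbetween : dist a p + dist p b = dist a b := hc.dist_add hmem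
  have hpb : dist p b = 50 * ν := by
    rw [dist_comm, hc.dist_right hmem]
    ring
  obtain ⟨q, g, hg, hlong, u, hu, hbu⟩ := hlocal p b (by linarith)
  have hpu : dist p (g u) = u := hg.dist_left hu
  have hu49 : 49 * ν ≤ u := by linarith [dist_triangle p (g u) b, dist_comm (g u) b]
  have hu51 : u ≤ 51 * ν := by linarith [dist_triangle p b (g u)]
  have hcorner : gromovProduct p q a ≤ 4 * ν := by
    rw [gromovProduct_comm]
    exact hhyp.gromovProduct_le_of_dist_le hgeo (gromovProduct_eq_zero_of_dist_add hbetween) hg hu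
      hbu (by linarith)
  -- the small corner at `p` puts `g u` near `[q, a]`
  obtain ⟨f, hf⟩ := hgeo q a
  obtain ⟨k, hk⟩ := hgeo a p
  obtain ⟨s, hs, hgf⟩ := hhyp.exists_dist_le_of_gromovProduct_lt hν.le hf hk hg.symm
    (t := dist p q - u) (by linarith [hu.2]) (by rw [dist_comm q p]; linarith)
  rw [sub_sub_cancel] at hgf
  have hs148 : 148 * ν ≤ s := by
    have := dist_triangle q (f s) (g u)
    rw [hf.dist_left hs, hg.dist_right hu, dist_comm (f s)] at this
    linarith
  refine ⟨⟨a, q, fun t => f (dist q a - t), hf.symm, by linarith [hs.2, dist_comm a q]⟩,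
    dist q a - s, rfl, by linarith [hs.2], by linarith [dist_comm a q], ?_⟩
  dsimp only
  rw [sub_sub_cancel]
  linarith [dist_triangle b (g u) (f s)]

theorem exists_longSegment_near (a b : X) :
    ∃ (S : LongSegment X ν) (u : ℝ),
      S.start = a ∧ 0 ≤ u ∧ u + 58 * ν < dist a S.finish ∧ dist b (S.path u) ≤ 2 * ν := by
  rcases lt_or_ge (100 * ν) (dist a b) with hab | hab
  · exact exists_longSegment_near_of_lt_dist hgeo hhyp hlocal hν hab
  obtain ⟨q, g, hg, hlong, u, hu, hbu⟩ := hlocal a b hab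
  have hu101 : u ≤ 101 * ν := by linarith [dist_triangle a b (g u), hg.dist_left hu]
  exact ⟨⟨a, q, g, hg, by linarith⟩, u, rfl, hu.1, by linarith, by linarith⟩

end Construction

theorem exists_isGeodesicRay_tendsto [ProperSpace X] {a : X} {x : ℕ → X}
    {γ : ℕ → ℝ → X} (hγ : ∀ n, IsGeodesicSegment (γ n) a (x n)) (U : Ultrafilter ℕ)
    (hx : ∀ C, ∀ᶠ n in U, C ≤ dist a (x n)) :
    ∃ r : ℝ → X, IsGeodesicRay r ∧ r 0 = a ∧
      ∀ t, 0 ≤ t → Tendsto (fun n => γ n t) U (𝓝 (r t)) := by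
  have hlim : ∀ t, 0 ≤ t → ∃ z, Tendsto (fun n => γ n t) U (𝓝 z) := by
    intro t ht
    have hball : ∀ᶠ n in U, γ n t ∈ closedBall a t := (hx t).mono fun n hn => by
      rw [mem_closedBall, dist_comm, (hγ n).dist_left ⟨ht, hn⟩]
    obtain ⟨z, -, hz⟩ :=
      (isCompact_closedBall a t).ultrafilter_le_nhds (U.map fun n => γ n t)
        (le_principal_iff.2 hball)
    exact ⟨z, hz⟩
  have : Nonempty X := ⟨a⟩
  choose! r hr using hlim
  refine ⟨r, fun s t hs ht => ?_, ?_, hr⟩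
  · have hdist : ∀ᶠ n in U, dist (γ n s) (γ n t) = |s - t| := (hx (max s t)).mono fun n hn =>
      (hγ n).2.2 s ⟨hs, (le_max_left s t).trans hn⟩ t ⟨ht, (le_max_right s t).trans hn⟩
    exact tendsto_nhds_unique (((hr s hs).dist (hr t ht)).congr' hdist) tendsto_const_nhds
  · have h0 : Tendsto (fun n => γ n 0) U (𝓝 a) := by
      simp only [(hγ _).1]
      exact tendsto_const_nhds
    exact tendsto_nhds_unique (hr 0 le_rfl) h0

theorem exists_isGeodesicRay_near [ProperSpace X] {a b : X} {D : ℝ} {x : ℕ → X}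
    {γ : ℕ → ℝ → X} (hγ : ∀ n, IsGeodesicSegment (γ n) a (x n))
    (hx : Tendsto (fun n => dist a (x n)) atTop atTop)
    (hb : ∀ n, ∃ s ∈ Icc 0 (dist a (x n)), dist b (γ n s) ≤ D) :
    ∃ r : ℝ → X, IsGeodesicRay r ∧ r 0 = a ∧ ∃ t, 0 ≤ t ∧ dist b (r t) ≤ D := by
  choose s hs hsb using hb
  -- an ultrafilter finer than `atTop` replaces the diagonal subsequence of Arzelà–Ascoli
  set U := Ultrafilter.of (atTop : Filter ℕ)
  have hxU : ∀ C, ∀ᶠ n in U, C ≤ dist a (x n) := fun C =>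
    Ultrafilter.of_le atTop (hx.eventually_ge_atTop C)
  obtain ⟨r, hr, hr0, hγr⟩ := exists_isGeodesicRay_tendsto hγ U hxU
  have hsR : ∀ n, s n ∈ Icc 0 (dist a b + D) := fun n => ⟨(hs n).1, by
    linarith [dist_triangle a b (γ n (s n)), (hγ n).dist_left (hs n), hsb n]⟩
  obtain ⟨t, ht, hst⟩ :=
    isCompact_Icc.ultrafilter_le_nhds (U.map s)
      (le_principal_iff.2 (mem_map.2 (univ_mem' hsR)))
  have hbound : ∀ᶠ n in U, dist b (γ n t) ≤ D + dist (s n) t := (hxU t).mono fun n hn => by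
    calc dist b (γ n t) ≤ dist b (γ n (s n)) + dist (γ n (s n)) (γ n t) := dist_triangle _ _ _
      _ ≤ D + dist (s n) t := by
        rw [(hγ n).2.2 _ (hs n) t ⟨ht.1, hn⟩, ← Real.dist_eq]
        linarith [hsb n]
  have hlim : Tendsto (fun n => D + dist (s n) t) U (𝓝 (D + dist t t)) :=
    tendsto_const_nhds.add ((show Tendsto s U (𝓝 t) from hst).dist tendsto_const_nhds)
  refine ⟨r, hr, hr0, t, ht.1, ?_⟩
  simpa using le_of_tendsto_of_tendsto (tendsto_const_nhds.dist (hγr t ht.1)) hlim hbound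

/-- **Proposition (GMS 6.3).** For every `ν ≥ 1`: if `Υ` is a proper `ν`-hyperbolic geodesic
space such that any two points at distance at most `100ν` lie, up to error `ν`, on a geodesic of
length at least `200ν` issuing from the first, then `Υ` is `5ν`-visible. -/
theorem local_visibility
    (ν : ℝ) (hν : 1 ≤ ν) [ProperSpace X]
    (hgeo : GeodesicSpace X) (hhyp : SlimTriangles X ν)
    (hlocal : ∀ p q : X, dist p q ≤ 100 * ν →
      ∃ (q' : X) (f : ℝ → X), IsGeodesicSegment f p q' ∧ 200 * ν ≤ dist p q' ∧
        ∃ t ∈ Icc (0 : ℝ) (dist p q'), dist q (f t) ≤ ν) :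
    Visible X (5 * ν) := by
  have hν0 : 0 < ν := by linarith
  intro a b
  obtain ⟨S, u, rfl, hu0, hu, hbu⟩ := exists_longSegment_near hgeo hhyp hlocal hν0 a b
  obtain ⟨v, hv0, hv1, hv⟩ := exists_isStraightChain hgeo hhyp hlocal hν0 S
  have he : IsGeodesicSegment S.path (v 0) (v 1) :=
    hv0 ▸ hv1 ▸ S.isGeodesicSegment.restrict (LongSegment.pivot_mem hν0.le)
  have hu' : u + 8 * ν < dist (v 0) (v 1) := by
    rw [hv0, hv1, LongSegment.dist_start_pivot hν0.le]
    linarith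
  choose γ hγ using fun x y : X => hgeo x y
  rw [← hv0]
  refine exists_isGeodesicRay_near (fun n => hγ (v 0) (v (n + 1))) ?_ fun n => ?_
  · refine tendsto_atTop_mono (fun n => (hv (n + 1)).mul_le_dist hgeo hhyp hν0 (n + 1) le_rfl) ?_
    exact (tendsto_natCast_atTop_atTop.comp (tendsto_add_atTop_nat 1)).const_mul_atTop hν0
  · obtain ⟨s, hs, hsd⟩ :=
      (hv (n + 1)).exists_dist_le hgeo hhyp hν0 (by omega) he (hγ _ _) hu0 hu'
    exact ⟨s, hs, by linarith [dist_triangle b (S.path u) (γ (v 0) (v (n + 1)) s)]⟩
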